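/- arXiv:2211.12977 — 2 statements merged into one kernel-verified Lean document; each statement's English description precedes it below -/
import Mathlib

section
/- Let ε > 0 and Λ : {0,1}^n → ℝ satisfy: (a) Λ̂(0) = 1, (b) Λ̂ ≥ 0, and (c) A·Λ̂ ≥ (n − 2d + 2ε)·Λ̂ pointwise, where A is the adjacency operator of the Hamming cube. Then g(x) := 2(d − |x|)·Λ(x)^2 satisfies: ĝ ≥ 0, ĝ(0) > 0, g(x) ≤ 0 whenever |x| ≥ d, and g(0)/ĝ(0) ≤ (d/ε)·|supp(Λ̂)|. -/
open Finset

/-- Hamming weight of a vector in `{0,1}^n`. -/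
def wt {n : ℕ} (x : Fin n → ZMod 2) : ℕ := (Finset.univ.filter fun i => x i ≠ 0).card

/-- Fourier transform on the cube: `f̂(x) = 2^{-n} ∑_y f(y) (-1)^{⟨x,y⟩}`. -/
noncomputable def ft {n : ℕ} (f : (Fin n → ZMod 2) → ℝ) : (Fin n → ZMod 2) → ℝ :=
  fun x => (∑ y, f y * (-1:ℝ)^(∑ i, (x i * y i).val)) / (2:ℝ)^n

/-- Adjacency operator of the Hamming cube: `(Af)(x) = ∑_{y : |y+x|=1} f(y)`. -/
noncomputable def adj {n : ℕ} (f : (Fin n → ZMod 2) → ℝ) : (Fin n → ZMod 2) → ℝ :=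
  fun x => ∑ y ∈ Finset.univ.filter (fun y => wt (x + y) = 1), f y

noncomputable def chr {n : ℕ} (x y : Fin n → ZMod 2) : ℝ := (-1:ℝ)^(∑ i, (x i * y i).val)

lemma ft_eq {n : ℕ} (f : (Fin n → ZMod 2) → ℝ) (x : Fin n → ZMod 2) :
    ft f x = (∑ y, f y * chr x y) / (2:ℝ)^n := rfl

lemma chr_comm {n : ℕ} (x y : Fin n → ZMod 2) : chr x y = chr y x := by
  simp [chr, mul_comm]

lemma zmod2_ne_zero {a : ZMod 2} (h : a ≠ 0) : a = 1 := by
  revert a; decide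

lemma neg_one_val_add (a b : ZMod 2) : (-1:ℝ)^((a+b).val) = (-1)^a.val * (-1)^b.val := by
  have h01 : ∀ c : ZMod 2, c = 0 ∨ c = 1 := by decide
  rcases h01 a with rfl | rfl <;> rcases h01 b with rfl | rfl <;>
    norm_num [show ((1 + 1 : ZMod 2)).val = 0 from rfl, show ((2:ZMod 2)).val = 0 from rfl, show ((1:ZMod 2)).val = 1 from rfl]

lemma chr_prod {n : ℕ} (x y : Fin n → ZMod 2) :
    chr x y = ∏ i, (-1:ℝ)^((x i * y i).val) := (Finset.prod_pow_eq_pow_sum _ _ _).symm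

lemma chr_add_right {n : ℕ} (x y z : Fin n → ZMod 2) :
    chr x (y + z) = chr x y * chr x z := by
  simp only [chr_prod, ← Finset.prod_mul_distrib]
  refine Finset.prod_congr rfl fun i _ => ?_
  have h : x i * (y + z) i = x i * y i + x i * z i := by
    simp [Pi.add_apply, mul_add]
  rw [h, neg_one_val_add]

lemma chr_add_left {n : ℕ} (x y z : Fin n → ZMod 2) :
    chr (x + y) z = chr x z * chr y z := by
  rw [chr_comm, chr_add_right, chr_comm z x, chr_comm z y]

lemma sum_chr {n : ℕ} (x : Fin n → ZMod 2) :
    ∑ y : Fin n → ZMod 2, chr x y = if x = 0 then (2:ℝ)^n else 0 := by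
  simp only [chr_prod]
  rw [← Fintype.piFinset_univ, ← Finset.prod_univ_sum (fun _ => univ) (fun i b => (-1:ℝ)^((x i * b).val))]
  by_cases hx : x = 0
  · subst hx; simp
  · rw [if_neg hx]
    obtain ⟨i, hi⟩ : ∃ i, x i ≠ 0 := by
      by_contra h; push_neg at h; exact hx (funext h)
    refine Finset.prod_eq_zero (Finset.mem_univ i) ?_
    rw [zmod2_ne_zero hi]
    have h2 : ∑ b : ZMod 2, (-1:ℝ)^(b.val) = 0 := by
      rw [show (univ : Finset (ZMod 2)) = {0, 1} by decide]
      norm_num [show ((1:ZMod 2)).val = 1 from rfl, show ((0:ZMod 2)).val = 0 from rfl]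
    simpa using h2

lemma sum_chr_left {n : ℕ} (y : Fin n → ZMod 2) :
    ∑ x : Fin n → ZMod 2, chr x y = if y = 0 then (2:ℝ)^n else 0 := by
  simp only [chr_comm _ y]; exact sum_chr y

lemma zmod2_add_eq_zero : ∀ {a b : ZMod 2}, a + b = 0 → b = a := by decide

lemma zmod2_add_self : ∀ a : ZMod 2, a + a = 0 := by decide

lemma pi_add_self {n : ℕ} (u : Fin n → ZMod 2) : u + u = 0 := by
  funext j; exact zmod2_add_self (u j)

lemma pi_add_eq_zero {n : ℕ} {u v : Fin n → ZMod 2} (h : u + v = 0) : v = u := by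
  funext j; exact zmod2_add_eq_zero (congrFun h j)

def ee {n : ℕ} (i : Fin n) : Fin n → ZMod 2 := fun j => if j = i then 1 else 0

lemma wt_eq_one_iff {n : ℕ} (z : Fin n → ZMod 2) : wt z = 1 ↔ ∃ i, z = ee i := by
  constructor
  · intro h
    obtain ⟨a, ha⟩ := Finset.card_eq_one.mp h
    refine ⟨a, funext fun j => ?_⟩
    by_cases hj : j = a
    · subst hj
      have : j ∈ Finset.univ.filter fun i => z i ≠ 0 := ha ▸ Finset.mem_singleton_self j
      simp only [Finset.mem_filter] at this
      simp [ee, zmod2_ne_zero this.2]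
    · have : j ∉ Finset.univ.filter fun i => z i ≠ 0 := by
        rw [ha]; simp [hj]
      simp only [Finset.mem_filter, Finset.mem_univ, true_and, not_not] at this
      simp [ee, hj, this]
  · rintro ⟨i, rfl⟩
    have : (Finset.univ.filter fun j => ee i j ≠ 0) = {i} := by
      ext j; simp [ee]
    simp [wt, this]

lemma ee_inj {n : ℕ} : Function.Injective (ee (n := n)) := by
  intro i j h
  by_contra hij
  have := congrFun h i
  simp only [ee, if_pos rfl, if_neg hij] at this
  exact one_ne_zero this

lemma adj_eq_sum {n : ℕ} (f : (Fin n → ZMod 2) → ℝ) (x : Fin n → ZMod 2) :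
    adj f x = ∑ i, f (x + ee i) := by
  have hset : (Finset.univ.filter fun y => wt (x + y) = 1)
      = Finset.univ.image (fun i => x + ee i) := by
    ext y
    simp only [Finset.mem_filter, Finset.mem_univ, true_and, Finset.mem_image, wt_eq_one_iff]
    constructor
    · rintro ⟨i, hi⟩
      exact ⟨i, by rw [← hi, ← add_assoc, pi_add_self, zero_add]⟩
    · rintro ⟨i, _, rfl⟩
      exact ⟨i, by rw [← add_assoc, pi_add_self, zero_add]⟩
  rw [adj, hset, Finset.sum_image]
  intro i _ j _ h
  exact ee_inj (add_left_cancel h)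

lemma chr_ee {n : ℕ} (i : Fin n) (y : Fin n → ZMod 2) :
    chr (ee i) y = (-1:ℝ)^((y i).val) := by
  rw [chr_prod]
  rw [Finset.prod_eq_single i]
  · simp [ee]
  · intro j _ hj
    simp [ee, hj]
  · simp

lemma sum_neg_one_pow {n : ℕ} (y : Fin n → ZMod 2) :
    ∑ i, (-1:ℝ)^((y i).val) = (n:ℝ) - 2 * wt y := by
  classical
  rw [← Finset.sum_filter_add_sum_filter_not Finset.univ (fun i => y i ≠ 0)]
  have h1 : ∀ i ∈ Finset.univ.filter (fun i => y i ≠ 0), (-1:ℝ)^((y i).val) = -1 := by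
    intro i hi
    simp only [Finset.mem_filter] at hi
    rw [zmod2_ne_zero hi.2]; norm_num [show ((1:ZMod 2)).val = 1 from rfl]
  have h2 : ∀ i ∈ Finset.univ.filter (fun i => ¬ y i ≠ 0), (-1:ℝ)^((y i).val) = 1 := by
    intro i hi
    simp only [Finset.mem_filter, not_not] at hi
    rw [hi.2]; norm_num [show ((0:ZMod 2)).val = 0 from rfl]
  rw [Finset.sum_congr rfl h1, Finset.sum_congr rfl h2]
  rw [Finset.sum_const, Finset.sum_const, nsmul_eq_mul, nsmul_eq_mul]
  have hk : (Finset.univ.filter (fun i => y i ≠ 0)).card = wt y := rfl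
  have h := Finset.card_filter_add_card_filter_not
    (s := (Finset.univ : Finset (Fin n))) (p := fun i => y i ≠ 0)
  simp only [Finset.card_univ, Fintype.card_fin] at h
  rw [hk] at h
  have h' : (wt y : ℝ) + ((Finset.univ.filter (fun a => ¬ y a ≠ 0)).card : ℝ) = n := by
    exact_mod_cast congrArg (Nat.cast : ℕ → ℝ) h
  rw [hk]
  linarith

lemma ft_add {n : ℕ} (f g : (Fin n → ZMod 2) → ℝ) (x : Fin n → ZMod 2) :
    ft (fun y => f y + g y) x = ft f x + ft g x := by
  simp [ft_eq, add_mul, Finset.sum_add_distrib, add_div]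

lemma ft_const_mul {n : ℕ} (c : ℝ) (f : (Fin n → ZMod 2) → ℝ) (x : Fin n → ZMod 2) :
    ft (fun y => c * f y) x = c * ft f x := by
  simp [ft_eq, mul_assoc, ← Finset.mul_sum, mul_div_assoc]

lemma ft_mul_weight {n : ℕ} (h : (Fin n → ZMod 2) → ℝ) (x : Fin n → ZMod 2) :
    ft (fun y => ((n:ℝ) - 2*wt y) * h y) x = adj (ft h) x := by
  rw [adj_eq_sum]
  simp only [ft_eq]
  rw [← Finset.sum_div]
  congr 1
  rw [Finset.sum_comm]
  refine Finset.sum_congr rfl fun y _ => ?_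
  simp only [chr_add_left, chr_ee]
  have : ∑ i, h y * (chr x y * (-1:ℝ)^((y i).val))
      = h y * (chr x y * ∑ i, (-1:ℝ)^((y i).val)) := by
    rw [Finset.mul_sum, Finset.mul_sum]
  rw [this, sum_neg_one_pow]
  ring

lemma ft_sq {n : ℕ} (Λ : (Fin n → ZMod 2) → ℝ) (x : Fin n → ZMod 2) :
    ft (fun y => (Λ y)^2) x = ∑ z, ft Λ z * ft Λ (x + z) := by
  have h2n : ((2:ℝ)^n) ≠ 0 := by positivity
  simp only [ft_eq]
  rw [eq_comm]
  have step1 : ∀ z : Fin n → ZMod 2,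
      (∑ u, Λ u * chr z u)/(2:ℝ)^n * ((∑ v, Λ v * chr (x+z) v)/(2:ℝ)^n)
      = (∑ u, ∑ v, Λ u * Λ v * chr x v * chr z (u+v)) / ((2:ℝ)^n * (2:ℝ)^n) := by
    intro z
    rw [div_mul_div_comm]
    congr 1
    rw [Finset.sum_mul_sum]
    refine Finset.sum_congr rfl fun u _ => Finset.sum_congr rfl fun v _ => ?_
    rw [chr_add_left]
    rw [show Λ u * chr z u * (Λ v * (chr x v * chr z v))
        = Λ u * Λ v * chr x v * (chr z u * chr z v) by ring, ← chr_add_right]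
  calc ∑ z, (∑ u, Λ u * chr z u)/(2:ℝ)^n * ((∑ v, Λ v * chr (x+z) v)/(2:ℝ)^n)
      = (∑ z, ∑ u, ∑ v, Λ u * Λ v * chr x v * chr z (u+v)) / ((2:ℝ)^n * (2:ℝ)^n) := by
        rw [Finset.sum_congr rfl fun z _ => step1 z, ← Finset.sum_div]
    _ = (∑ u, ∑ v, ∑ z, Λ u * Λ v * chr x v * chr z (u+v)) / ((2:ℝ)^n * (2:ℝ)^n) := by
        rw [Finset.sum_comm]
        congr 1
        exact Finset.sum_congr rfl fun u _ => Finset.sum_comm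
    _ = (∑ u, (Λ u)^2 * chr x u * (2:ℝ)^n) / ((2:ℝ)^n * (2:ℝ)^n) := by
        congr 1
        refine Finset.sum_congr rfl fun u _ => ?_
        rw [Finset.sum_eq_single u]
        · rw [show ∑ z, Λ u * Λ u * chr x u * chr z (u+u)
              = Λ u * Λ u * chr x u * ∑ z, chr z (u+u) by rw [Finset.mul_sum]]
          rw [pi_add_self, show (∑ z, chr z (0 : Fin n → ZMod 2)) = (2:ℝ)^n by
            rw [sum_chr_left]; simp]
          ring
        · intro v _ hv
          have hne : u + v ≠ 0 := fun h => hv (pi_add_eq_zero h)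
          rw [show ∑ z, Λ u * Λ v * chr x v * chr z (u+v)
              = Λ u * Λ v * chr x v * ∑ z, chr z (u+v) by rw [Finset.mul_sum]]
          rw [sum_chr_left, if_neg hne, mul_zero]
        · simp
    _ = (∑ u, Λ u^2 * chr x u) / (2:ℝ)^n := by
        rw [← Finset.sum_mul]
        field_simp

lemma inversion_zero {n : ℕ} (Λ : (Fin n → ZMod 2) → ℝ) : Λ 0 = ∑ x, ft Λ x := by
  have h2n : ((2:ℝ)^n) ≠ 0 := by positivity
  simp only [ft_eq]
  rw [← Finset.sum_div, Finset.sum_comm]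
  have h : ∀ y : Fin n → ZMod 2, ∑ x : Fin n → ZMod 2, Λ y * chr x y
      = Λ y * (if y = 0 then (2:ℝ)^n else 0) := by
    intro y; rw [← Finset.mul_sum, sum_chr_left]
  rw [Finset.sum_congr rfl fun y _ => h y, Finset.sum_eq_single 0]
  · rw [if_pos rfl, mul_div_assoc, div_self h2n, mul_one]
  · intro y _ hy; rw [if_neg hy, mul_zero]
  · simp

lemma adj_ft_sq {n : ℕ} (Λ : (Fin n → ZMod 2) → ℝ) (x : Fin n → ZMod 2) :
    adj (ft (fun y => (Λ y)^2)) x = ∑ z, ft Λ z * adj (ft Λ) (x + z) := by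
  rw [adj_eq_sum]
  simp only [ft_sq]
  rw [Finset.sum_comm]
  refine Finset.sum_congr rfl fun z _ => ?_
  rw [adj_eq_sum, Finset.mul_sum]
  refine Finset.sum_congr rfl fun i _ => ?_
  congr 2
  abel

lemma ft_g {n d : ℕ} (Λ : (Fin n → ZMod 2) → ℝ) (x : Fin n → ZMod 2) :
    ft (fun y => 2*((d:ℝ) - wt y) * (Λ y)^2) x
    = ∑ z, ft Λ z * ((2*(d:ℝ) - n) * ft Λ (x+z) + adj (ft Λ) (x+z)) := by
  have hfun : (fun y => 2*((d:ℝ) - wt y) * (Λ y)^2)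
      = fun y => (2*(d:ℝ) - n) * (Λ y)^2 + ((n:ℝ) - 2*wt y) * ((fun u => (Λ u)^2) y) := by
    funext y; ring
  rw [hfun, ft_add, ft_const_mul, ft_mul_weight, ft_sq, adj_ft_sq]
  rw [Finset.mul_sum, ← Finset.sum_add_distrib]
  refine Finset.sum_congr rfl fun z _ => ?_
  ring

theorem first_lp_bound_feasibility (n d : ℕ) (ε : ℝ) (hε : 0 < ε)
    (Λ : (Fin n → ZMod 2) → ℝ)
    (ha : ft Λ 0 = 1)
    (hb : ∀ x, 0 ≤ ft Λ x)
    (hc : ∀ x, ((n:ℝ) - 2*d + 2*ε) * ft Λ x ≤ adj (ft Λ) x) :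
    (∀ x, 0 ≤ ft (fun y => 2*((d:ℝ) - wt y) * (Λ y)^2) x) ∧
    0 < ft (fun y => 2*((d:ℝ) - wt y) * (Λ y)^2) 0 ∧
    (∀ x, d ≤ wt x → 2*((d:ℝ) - wt x) * (Λ x)^2 ≤ 0) ∧
    (2*((d:ℝ) - wt (0 : Fin n → ZMod 2)) * (Λ 0)^2) / ft (fun y => 2*((d:ℝ) - wt y) * (Λ y)^2) 0
      ≤ ((d:ℝ)/ε) * (Finset.univ.filter fun x => ft Λ x ≠ 0).card := by
  have key : ∀ x, 2*ε * ∑ z, ft Λ z * ft Λ (x+z)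
      ≤ ft (fun y => 2*((d:ℝ) - wt y) * (Λ y)^2) x := by
    intro x
    rw [ft_g, Finset.mul_sum]
    refine Finset.sum_le_sum fun z _ => ?_
    have h1 := hc (x+z)
    have h2 := hb z
    rw [show 2*ε * (ft Λ z * ft Λ (x+z)) = ft Λ z * (2*ε*ft Λ (x+z)) by ring]
    exact mul_le_mul_of_nonneg_left (by linarith) h2
  have conv_nonneg : ∀ x, 0 ≤ ∑ z, ft Λ z * ft Λ (x+z) := fun x =>
    Finset.sum_nonneg fun z _ => mul_nonneg (hb z) (hb (x+z))
  have part1 : ∀ x, 0 ≤ ft (fun y => 2*((d:ℝ) - wt y) * (Λ y)^2) x := fun x =>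
    le_trans (mul_nonneg (by linarith) (conv_nonneg x)) (key x)
  have hS1 : (1:ℝ) ≤ ∑ z, (ft Λ z)^2 := by
    calc (1:ℝ) = (ft Λ 0)^2 := by rw [ha]; norm_num
    _ ≤ ∑ z, (ft Λ z)^2 :=
        Finset.single_le_sum (fun z _ => sq_nonneg (ft Λ z)) (Finset.mem_univ 0)
  have hconv0 : ∑ z, ft Λ z * ft Λ (0+z) = ∑ z, (ft Λ z)^2 := by
    refine Finset.sum_congr rfl fun z _ => ?_
    rw [zero_add, sq]
  have key0 : 2*ε * ∑ z, (ft Λ z)^2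
      ≤ ft (fun y => 2*((d:ℝ) - wt y) * (Λ y)^2) 0 := by
    rw [← hconv0]; exact key 0
  have part2 : 0 < ft (fun y => 2*((d:ℝ) - wt y) * (Λ y)^2) 0 := by
    have : 0 < 2*ε * ∑ z, (ft Λ z)^2 := by nlinarith
    linarith
  have part3 : ∀ x, d ≤ wt x → 2*((d:ℝ) - wt x) * (Λ x)^2 ≤ 0 := by
    intro x hx
    have hcast : (d:ℝ) ≤ wt x := Nat.cast_le.mpr hx
    have : 2*((d:ℝ) - wt x) ≤ 0 := by linarith
    exact mul_nonpos_of_nonpos_of_nonneg this (sq_nonneg _)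
  refine ⟨part1, part2, part3, ?_⟩
  have wt0 : wt (0 : Fin n → ZMod 2) = 0 := by simp [wt]
  set S := ∑ z, (ft Λ z)^2 with hSdef
  set G0 := ft (fun y => 2*((d:ℝ) - wt y) * (Λ y)^2) 0 with hG0
  set s := Finset.univ.filter fun x => ft Λ x ≠ 0 with hs
  have hΛ0 : Λ 0 = ∑ x ∈ s, ft Λ x := by
    rw [inversion_zero Λ, hs, Finset.sum_filter_ne_zero]
  have hCS : (Λ 0)^2 ≤ (s.card : ℝ) * S := by
    rw [hΛ0]
    calc (∑ x ∈ s, ft Λ x)^2 ≤ (s.card : ℝ) * ∑ x ∈ s, (ft Λ x)^2 :=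
        sq_sum_le_card_mul_sum_sq
    _ ≤ (s.card : ℝ) * S := by
        apply mul_le_mul_of_nonneg_left _ (Nat.cast_nonneg _)
        exact Finset.sum_le_sum_of_subset_of_nonneg (Finset.filter_subset _ _)
          (fun z _ _ => sq_nonneg _)
  rw [wt0]
  rw [div_le_iff₀ part2]
  have hSpos : (0:ℝ) < S := by linarith
  have hineq1 : 2*((d:ℝ) - (0:ℕ)) * (Λ 0)^2 ≤ 2*(d:ℝ)*((s.card:ℝ)*S) := by
    push_cast
    nlinarith [Nat.cast_nonneg (α := ℝ) d, sq_nonneg (Λ 0)]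
  have hineq2 : 2*(d:ℝ)*((s.card:ℝ)*S) ≤ ((d:ℝ)/ε * s.card) * G0 := by
    have h1 : ((d:ℝ)/ε * s.card) * (2*ε*S) = 2*(d:ℝ)*((s.card:ℝ)*S) := by
      field_simp
    rw [← h1]
    apply mul_le_mul_of_nonneg_left key0
    positivity
  exact le_trans hineq1 hineq2
end

section
/- Let g_1 : {0,1}^n → ℝ satisfy ĝ_1 ≥ 0, ĝ_1(0) = 1, and g_1(x) ≤ 0 for |x| ≥ d. Define g : {0,1}^{ℓ×n} → ℝ by g(X) = 1 + (1/(2^ℓ−1))(g_1(x) − 1) if X = u x^T for some nonzero u ∈ {0,1}^ℓ and nonzero x ∈ {0,1}^n; g(0) = g_1(0); and g(X) = 1 otherwise. Then the Fourier transform of g is ĝ(X) = δ_0(X) + (2^{−(ℓ−1)n}/(2^ℓ−1)) Σ_{0≠u∈{0,1}^ℓ} [ĝ_1(u^T X) − δ_0(u^T X)]. -/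
open Finset

/-- Fourier transform on `{0,1}^{ℓ×n}`. -/
noncomputable def ftM {ℓ n : ℕ} (f : (Fin ℓ → Fin n → ZMod 2) → ℝ) :
    (Fin ℓ → Fin n → ZMod 2) → ℝ :=
  fun X => (∑ Y, f Y * (-1:ℝ)^(∑ i, ∑ j, (X i j * Y i j).val)) / (2:ℝ)^(ℓ*n)

/-- The rank-one matrix `u xᵀ` over `F₂`. -/
def outer {ℓ n : ℕ} (u : Fin ℓ → ZMod 2) (x : Fin n → ZMod 2) :
    Fin ℓ → Fin n → ZMod 2 :=
  fun i j => u i * x j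

/-- The `F₂`-linear combination `uᵀX` of the rows of `X`. -/
def rowComb {ℓ n : ℕ} (u : Fin ℓ → ZMod 2) (X : Fin ℓ → Fin n → ZMod 2) :
    Fin n → ZMod 2 :=
  fun j => ∑ i, u i * X i j

lemma zsum (a : ZMod 2) : (∑ y : ZMod 2, (-1:ℝ)^((a*y).val)) = if a = 0 then 2 else 0 := by
  rw [show (univ : Finset (ZMod 2)) = {0,1} by decide, Finset.sum_insert (by decide), Finset.sum_singleton]
  have h : ∀ b : ZMod 2, b = 0 ∨ b = 1 := by decide
  rcases h a with h | h <;> subst h <;> norm_num [ZMod.val_one]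

lemma vsum {m : ℕ} (z : Fin m → ZMod 2) :
    (∑ y : Fin m → ZMod 2, (-1:ℝ)^(∑ j, (z j * y j).val)) = if z = 0 then 2^m else 0 := by
  have key : ∀ y : Fin m → ZMod 2, (-1:ℝ)^(∑ j, (z j * y j).val) = ∏ j, (-1:ℝ)^((z j * y j).val) :=
    fun y => (Finset.prod_pow_eq_pow_sum univ _ _).symm
  simp only [key]
  rw [← Fintype.prod_sum (fun j (y : ZMod 2) => (-1:ℝ)^((z j * y).val))]
  simp only [zsum]
  by_cases hz : z = 0
  · subst hz; simp
  · rw [if_neg hz]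
    obtain ⟨j, hj⟩ := Function.ne_iff.mp hz
    exact Finset.prod_eq_zero (Finset.mem_univ j) (by simpa using hj)

lemma msum {ℓ n : ℕ} (X : Fin ℓ → Fin n → ZMod 2) :
    (∑ Y : Fin ℓ → Fin n → ZMod 2, (-1:ℝ)^(∑ i, ∑ j, (X i j * Y i j).val))
      = if X = 0 then 2^(ℓ*n) else 0 := by
  have key : ∀ Y : Fin ℓ → Fin n → ZMod 2,
      (-1:ℝ)^(∑ i, ∑ j, (X i j * Y i j).val)
        = ∏ i, (-1:ℝ)^(∑ j, (X i j * Y i j).val) :=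
    fun Y => (Finset.prod_pow_eq_pow_sum univ _ _).symm
  simp only [key]
  rw [← Fintype.prod_sum (fun i (y : Fin n → ZMod 2) => (-1:ℝ)^(∑ j, (X i j * y j).val))]
  simp only [vsum]
  by_cases hX : X = 0
  · subst hX; simp [pow_mul, mul_comm ℓ n]
  · rw [if_neg hX]
    obtain ⟨i, hi⟩ := Function.ne_iff.mp hX
    exact Finset.prod_eq_zero (Finset.mem_univ i) (by simpa using hi)

lemma parity {ℓ n : ℕ} (X : Fin ℓ → Fin n → ZMod 2) (u : Fin ℓ → ZMod 2) (x : Fin n → ZMod 2) :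
    (-1:ℝ)^(∑ i, ∑ j, (X i j * (u i * x j)).val) = (-1:ℝ)^(∑ j, (((∑ i, u i * X i j)) * x j).val) := by
  rw [neg_one_pow_eq_pow_mod_two, neg_one_pow_eq_pow_mod_two (∑ j, _)]
  congr 1
  rw [← ZMod.natCast_eq_natCast_iff']
  push_cast
  simp only [ZMod.natCast_val, ZMod.cast_id]
  rw [Finset.sum_comm]
  congr 1; ext j
  rw [Finset.sum_mul]
  congr 1; ext i; ring

lemma outer_ne_zero {ℓ n : ℕ} {u : Fin ℓ → ZMod 2} {x : Fin n → ZMod 2}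
    (hu : u ≠ 0) (hx : x ≠ 0) : outer u x ≠ 0 := by
  obtain ⟨i, hi⟩ := Function.ne_iff.mp hu
  obtain ⟨j, hj⟩ := Function.ne_iff.mp hx
  intro h
  have := congrFun (congrFun h i) j
  simp only [outer] at this
  rw [show u i = 1 from zmod2_ne_zero (by simpa using hi),
    show x j = 1 from zmod2_ne_zero (by simpa using hj)] at this
  simp at this

lemma outer_inj {ℓ n : ℕ} {u u' : Fin ℓ → ZMod 2} {x x' : Fin n → ZMod 2}
    (hu : u ≠ 0) (hx : x ≠ 0) (hu' : u' ≠ 0) (hx' : x' ≠ 0)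
    (h : outer u x = outer u' x') : u = u' ∧ x = x' := by
  obtain ⟨i, hi⟩ := Function.ne_iff.mp hu
  have hi1 : u i = 1 := zmod2_ne_zero (by simpa using hi)
  have hxx : x = x' := by
    have hui' : u' i = 1 := by
      by_contra hc
      have h0 : u' i = 0 := by
        have := zmod2_ne_zero (a := u' i); tauto
      apply hx
      funext j
      have := congrFun (congrFun h i) j
      rw [outer, outer, hi1, h0] at this
      simpa using this
    funext j
    have := congrFun (congrFun h i) j
    rw [outer, outer, hi1, hui'] at this
    simpa using this
  refine ⟨?_, hxx⟩
  obtain ⟨j, hj⟩ := Function.ne_iff.mp hx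
  have hj1 : x j = 1 := zmod2_ne_zero (by simpa using hj)
  funext i'
  have := congrFun (congrFun h i') j
  rw [outer, outer, hj1, ← hxx, hj1] at this
  simpa using this

lemma innerSumAux {n : ℕ} (g₁ : (Fin n → ZMod 2) → ℝ) (z : Fin n → ZMod 2) :
    ∑ x ∈ univ.filter (fun x : Fin n → ZMod 2 => x ≠ 0),
        (g₁ x - 1) * (-1:ℝ)^(∑ j, (z j * x j).val)
      = (2:ℝ)^n * ft g₁ z - (if z = 0 then (2:ℝ)^n else 0) - (g₁ 0 - 1) := by
  have hfe : univ.filter (fun x : Fin n → ZMod 2 => x ≠ 0) = univ.erase 0 := by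
    ext x; simp [Finset.mem_erase]
  rw [hfe, Finset.sum_erase_eq_sub (Finset.mem_univ 0)]
  have h0 : (g₁ 0 - 1) * (-1:ℝ)^(∑ j, (z j * (0 : Fin n → ZMod 2) j).val) = g₁ 0 - 1 := by
    simp
  rw [h0]
  congr 1
  have hsplit : ∑ x : Fin n → ZMod 2, (g₁ x - 1) * (-1:ℝ)^(∑ j, (z j * x j).val)
      = (∑ x : Fin n → ZMod 2, g₁ x * (-1:ℝ)^(∑ j, (z j * x j).val))
        - ∑ x : Fin n → ZMod 2, (-1:ℝ)^(∑ j, (z j * x j).val) := by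
    rw [← Finset.sum_sub_distrib]; exact Finset.sum_congr rfl fun _ _ => by ring
  rw [hsplit, vsum]
  congr 1
  rw [ft]
  field_simp

lemma card_nonzero {ℓ : ℕ} :
    (univ.filter (fun u : Fin ℓ → ZMod 2 => u ≠ 0)).card = 2^ℓ - 1 := by
  have hfe : univ.filter (fun u : Fin ℓ → ZMod 2 => u ≠ 0) = univ.erase 0 := by
    ext u; simp [Finset.mem_erase]
  rw [hfe, Finset.card_erase_of_mem (Finset.mem_univ 0), Finset.card_univ]
  congr 1
  simp [Fintype.card_fun]


/-- The Fourier transform of the lifted dual solution `g`: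
`ĝ(X) = δ₀(X) + (2^{-(ℓ-1)n}/(2^ℓ-1)) ∑_{u ≠ 0} [ĝ₁(uᵀX) - δ₀(uᵀX)]`. -/
theorem lifted_solution_fourier (n ℓ : ℕ) (hℓ : 0 < ℓ) (d : ℕ)
    (g₁ : (Fin n → ZMod 2) → ℝ)
    (hg₁pos : ∀ x, 0 ≤ ft g₁ x) (hg₁0 : ft g₁ 0 = 1)
    (hg₁d : ∀ x, d ≤ wt x → g₁ x ≤ 0)
    (g : (Fin ℓ → Fin n → ZMod 2) → ℝ)
    (hgzero : g 0 = g₁ 0)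
    (hgrank1 : ∀ (u : Fin ℓ → ZMod 2) (x : Fin n → ZMod 2), u ≠ 0 → x ≠ 0 →
      g (outer u x) = 1 + (1/((2:ℝ)^ℓ - 1)) * (g₁ x - 1))
    (hgother : ∀ X : Fin ℓ → Fin n → ZMod 2, X ≠ 0 →
      (¬ ∃ (u : Fin ℓ → ZMod 2) (x : Fin n → ZMod 2), u ≠ 0 ∧ x ≠ 0 ∧ X = outer u x) →
      g X = 1) :
    ∀ X : Fin ℓ → Fin n → ZMod 2,
      ftM g X = (if X = 0 then (1:ℝ) else 0)
        + (((2:ℝ)^((ℓ-1)*n))⁻¹ / ((2:ℝ)^ℓ - 1)) *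
          ∑ u ∈ Finset.univ.filter (fun u : Fin ℓ → ZMod 2 => u ≠ 0),
            (ft g₁ (rowComb u X) - (if rowComb u X = 0 then (1:ℝ) else 0)) := by
  intro X
  classical
  have h2ℓ : (1:ℝ) < 2^ℓ := one_lt_pow₀ (by norm_num) (by omega)
  have hcne : (2:ℝ)^ℓ - 1 ≠ 0 := ne_of_gt (by linarith)
  set c : ℝ := 1/((2:ℝ)^ℓ - 1) with hc
  set Su : Finset (Fin ℓ → ZMod 2) := univ.filter (fun u => u ≠ 0) with hSu
  set Sx : Finset (Fin n → ZMod 2) := univ.filter (fun x => x ≠ 0) with hSx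
  -- Step 1: split the numerator
  have hnum : (∑ Y : Fin ℓ → Fin n → ZMod 2,
        g Y * (-1:ℝ)^(∑ i, ∑ j, (X i j * Y i j).val))
      = (if X = 0 then (2:ℝ)^(ℓ*n) else 0)
        + ∑ Y : Fin ℓ → Fin n → ZMod 2,
            (g Y - 1) * (-1:ℝ)^(∑ i, ∑ j, (X i j * Y i j).val) := by
    rw [← msum X, ← Finset.sum_add_distrib]
    exact Finset.sum_congr rfl fun _ _ => by ring
  -- Step 2: restrict the error sum to its support
  have hsupp : (∑ Y : Fin ℓ → Fin n → ZMod 2,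
        (g Y - 1) * (-1:ℝ)^(∑ i, ∑ j, (X i j * Y i j).val))
      = ∑ Y ∈ insert 0 ((Su ×ˢ Sx).image fun p => outer p.1 p.2),
          (g Y - 1) * (-1:ℝ)^(∑ i, ∑ j, (X i j * Y i j).val) := by
    refine (Finset.sum_subset (Finset.subset_univ _) ?_).symm
    intro Y _ hY
    simp only [Finset.mem_insert, Finset.mem_image, not_or, not_exists] at hY
    obtain ⟨hY0, hYim⟩ := hY
    rw [hgother Y hY0 ?_, sub_self, zero_mul]
    rintro ⟨u, x, hu, hx, rfl⟩
    exact hYim (u, x) ⟨by simp [hSu, hSx, Finset.mem_product, hu, hx], rfl⟩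
  have h0notin : (0 : Fin ℓ → Fin n → ZMod 2)
      ∉ (Su ×ˢ Sx).image fun p => outer p.1 p.2 := by
    simp only [Finset.mem_image, not_exists]
    rintro ⟨u, x⟩ ⟨hmem, h⟩
    simp only [hSu, hSx, Finset.mem_product, Finset.mem_filter] at hmem
    exact outer_ne_zero hmem.1.2 hmem.2.2 h
  have hinj : ∀ p ∈ Su ×ˢ Sx, ∀ q ∈ Su ×ˢ Sx,
      outer p.1 p.2 = outer q.1 q.2 → p = q := by
    rintro ⟨u, x⟩ hp ⟨u', x'⟩ hq h
    simp only [hSu, hSx, Finset.mem_product, Finset.mem_filter] at hp hq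
    obtain ⟨h1, h2⟩ := outer_inj hp.1.2 hp.2.2 hq.1.2 hq.2.2 h
    exact Prod.ext h1 h2
  have hzero_term : (g 0 - 1) *
      (-1:ℝ)^(∑ i, ∑ j, ((X i j * (0 : Fin ℓ → Fin n → ZMod 2) i j)).val)
      = g₁ 0 - 1 := by
    simp [hgzero]
  -- Step 3: evaluate on the rank-one part
  have hrank : (∑ p ∈ Su ×ˢ Sx,
        (g (outer p.1 p.2) - 1) * (-1:ℝ)^(∑ i, ∑ j, (X i j * outer p.1 p.2 i j).val))
      = c * ∑ u ∈ Su, ((2:ℝ)^n * ft g₁ (rowComb u X)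
          - (if rowComb u X = 0 then (2:ℝ)^n else 0) - (g₁ 0 - 1)) := by
    rw [Finset.sum_product, Finset.mul_sum]
    refine Finset.sum_congr rfl fun u hu => ?_
    have huz : u ≠ 0 := by simpa [hSu] using hu
    rw [← innerSumAux g₁ (rowComb u X), Finset.mul_sum]
    refine Finset.sum_congr rfl fun x hx => ?_
    have hxz : x ≠ 0 := by simpa [hSx] using hx
    show (g (outer u x) - 1) * (-1:ℝ)^(∑ i, ∑ j, (X i j * outer u x i j).val)
        = c * ((g₁ x - 1) * (-1:ℝ)^(∑ j, (rowComb u X j * x j).val))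
    rw [hgrank1 u x huz hxz]
    have hpar := parity X u x
    rw [show (∑ i, ∑ j, (X i j * outer u x i j).val)
        = ∑ i, ∑ j, (X i j * (u i * x j)).val from rfl, hpar]
    simp only [rowComb]
    ring
  -- Step 4: the count
  have hcardR : ((Su.card : ℝ)) = (2:ℝ)^ℓ - 1 := by
    rw [hSu, card_nonzero]
    push_cast [Nat.one_le_two_pow]
    ring
  -- put it together
  have hT : (∑ Y : Fin ℓ → Fin n → ZMod 2,
        (g Y - 1) * (-1:ℝ)^(∑ i, ∑ j, (X i j * Y i j).val))
      = c * (2:ℝ)^n * ∑ u ∈ Su,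
          (ft g₁ (rowComb u X) - (if rowComb u X = 0 then (1:ℝ) else 0)) := by
    rw [hsupp, Finset.sum_insert h0notin, hzero_term, Finset.sum_image hinj, hrank]
    have expand : ∑ u ∈ Su, ((2:ℝ)^n * ft g₁ (rowComb u X)
          - (if rowComb u X = 0 then (2:ℝ)^n else 0) - (g₁ 0 - 1))
        = (2:ℝ)^n * (∑ u ∈ Su,
            (ft g₁ (rowComb u X) - (if rowComb u X = 0 then (1:ℝ) else 0)))
          - Su.card * (g₁ 0 - 1) := by
      rw [Finset.mul_sum, Finset.sum_sub_distrib, Finset.sum_const, nsmul_eq_mul]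
      congr 1
      refine Finset.sum_congr rfl fun u _ => ?_
      split_ifs <;> ring
    rw [expand, hcardR]
    have hc1 : c * ((2:ℝ)^ℓ - 1) = 1 := by
      rw [hc]; field_simp
    calc g₁ 0 - 1 + c * ((2:ℝ)^n * (∑ u ∈ Su,
            (ft g₁ (rowComb u X) - (if rowComb u X = 0 then (1:ℝ) else 0)))
          - ((2:ℝ)^ℓ - 1) * (g₁ 0 - 1))
        = c * (2:ℝ)^n * ∑ u ∈ Su,
            (ft g₁ (rowComb u X) - (if rowComb u X = 0 then (1:ℝ) else 0))
          + (1 - c * ((2:ℝ)^ℓ - 1)) * (g₁ 0 - 1) := by ring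
      _ = _ := by rw [hc1]; ring
  -- final assembly
  have hpow : (2:ℝ)^(ℓ*n) = (2:ℝ)^((ℓ-1)*n) * (2:ℝ)^n := by
    rw [← pow_add]
    congr 1
    calc ℓ*n = (ℓ-1+1)*n := by rw [Nat.sub_add_cancel hℓ]
      _ = (ℓ-1)*n + n := by ring
  have hftM : ftM g X = ((∑ Y : Fin ℓ → Fin n → ZMod 2,
      g Y * (-1:ℝ)^(∑ i, ∑ j, (X i j * Y i j).val))) / (2:ℝ)^(ℓ*n) := rfl
  rw [hftM, hnum, hT, add_div]
  have hpow_ne : (2:ℝ)^(ℓ*n) ≠ 0 := by positivity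
  have hpow_ne' : (2:ℝ)^((ℓ-1)*n) ≠ 0 := by positivity
  congr 1
  · split_ifs with h
    · field_simp
    · simp
  · rw [hpow]
    field_simp [hc]
    have hc1 : c * ((2:ℝ)^ℓ - 1) = 1 := by rw [hc]; field_simp
    linear_combination (∑ u ∈ Su, (ft g₁ (rowComb u X) - (if rowComb u X = 0 then (1:ℝ) else 0))) * hc1
end
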